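/- arXiv:2209.07478 — 5 statements merged into one kernel-verified Lean document; each statement's English description precedes it below -/
import Mathlib

section
/- Let h : ℝ → ℝ be continuously differentiable, and suppose there exist γ > 0 and ρ ∈ [0,1) such that h'(t) ≥ -γ · sign(h(t)) · |h(t)|^ρ for all t ≥ t₀. If h(t₀) ≥ 0, then h(t) ≥ 0 for all t ≥ t₀. -/
/-! Where `h < 0` the barrier inequality gives `h' ≥ γ |h|^ρ > 0`. So if `h` were negative at some
`t₁ ≥ t₀`, then on the stretch after the last time `s ≤ t₁` with `h s ≥ 0` the function would be
strictly increasing, forcing `h t₁ > h s ≥ 0`. -/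

open Set

theorem neg_mul_sign_mul_abs_rpow_pos {γ x : ℝ} (ρ : ℝ) (hγ : 0 < γ) (hx : x < 0) :
    0 < -γ * Real.sign x * |x| ^ ρ := by
  rw [Real.sign_of_neg hx, neg_mul_neg, mul_one]
  exact mul_pos hγ (Real.rpow_pos_of_pos (abs_pos.2 hx.ne) ρ)

theorem exists_last_nonneg_of_continuousOn {f : ℝ → ℝ} {a b : ℝ} (hf : ContinuousOn f (Icc a b))
    (hab : a ≤ b) (ha : 0 ≤ f a) :
    ∃ s ∈ Icc a b, 0 ≤ f s ∧ ∀ t ∈ Ioc s b, f t < 0 := by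
  have hclosed : IsClosed (Icc a b ∩ f ⁻¹' Ici 0) :=
    hf.preimage_isClosed_of_isClosed isClosed_Icc isClosed_Ici
  obtain ⟨s, ⟨hs, hfs⟩, hmax⟩ :=
    (isCompact_Icc.of_isClosed_subset hclosed inter_subset_left).exists_isGreatest
      ⟨a, left_mem_Icc.2 hab, ha⟩
  refine ⟨s, hs, hfs, fun t ht => ?_⟩
  by_contra hft
  exact (hmax ⟨⟨hs.1.trans ht.1.le, ht.2⟩, not_lt.1 hft⟩).not_gt ht.1

theorem nonneg_of_deriv_pos_of_neg {f : ℝ → ℝ} {a b : ℝ} (hf : ContinuousOn f (Icc a b))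
    (hab : a ≤ b) (ha : 0 ≤ f a) (hderiv : ∀ t ∈ Ioo a b, f t < 0 → 0 < deriv f t) :
    0 ≤ f b := by
  obtain ⟨s, hs, hfs, hneg⟩ := exists_last_nonneg_of_continuousOn hf hab ha
  by_contra hfb
  have hsb : s < b := hs.2.lt_of_ne fun hsb => hfb (hsb ▸ hfs)
  have hmono : StrictMonoOn f (Icc s b) := by
    refine strictMonoOn_of_deriv_pos (convex_Icc s b) (hf.mono (Icc_subset_Icc_left hs.1)) ?_
    rw [interior_Icc]
    exact fun t ht => hderiv t ⟨hs.1.trans_lt ht.1, ht.2⟩ (hneg t ⟨ht.1, ht.2.le⟩)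
  exact hfb (hfs.trans (hmono (left_mem_Icc.2 hsb.le) (right_mem_Icc.2 hsb.le) hsb).le)

theorem stmt_0_general (h : ℝ → ℝ) (t₀ γ ρ : ℝ)
    (hC1 : ContDiff ℝ 1 h) (hγ : 0 < γ)
    (hineq : ∀ t, t₀ ≤ t → deriv h t ≥ -γ * Real.sign (h t) * |h t| ^ ρ)
    (h0 : 0 ≤ h t₀) :
    ∀ t, t₀ ≤ t → 0 ≤ h t := fun _ ht =>
  nonneg_of_deriv_pos_of_neg hC1.continuous.continuousOn ht h0 fun t ht hneg =>
    (neg_mul_sign_mul_abs_rpow_pos ρ hγ hneg).trans_le (hineq t ht.1.le)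

/-- Forward invariance under the TV-FCBF differential inequality. -/
theorem stmt_0 (h : ℝ → ℝ) (t₀ γ ρ : ℝ)
    (hC1 : ContDiff ℝ 1 h) (hγ : 0 < γ) (hρ0 : 0 ≤ ρ) (hρ1 : ρ < 1)
    (hineq : ∀ t, t₀ ≤ t → deriv h t ≥ -γ * Real.sign (h t) * |h t| ^ ρ)
    (h0 : 0 ≤ h t₀) :
    ∀ t, t₀ ≤ t → 0 ≤ h t :=
  stmt_0_general h t₀ γ ρ hC1 hγ hineq h0
end

section
/- Let V : ℝ → ℝ be a nonnegative continuously differentiable function with V(t₀) > 0, and suppose V'(t) ≤ -γ V(t)^ρ for all t ≥ t₀ where γ > 0 and 0 ≤ ρ < 1. Then V reaches zero in finite time: there exists t₁ ∈ [t₀, t₀ + V(t₀)^(1-ρ)/(γ(1-ρ))] with V(t₁) = 0. -/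
/-- Finite-time Lyapunov comparison lemma: `V' ≤ -γ V^ρ` with `ρ ∈ [0,1)`
forces `V` to reach zero within time `V(t₀)^(1-ρ)/(γ(1-ρ))`. -/
theorem stmt_2 (V : ℝ → ℝ) (t₀ γ ρ : ℝ)
    (hC1 : ContDiff ℝ 1 V) (hnonneg : ∀ t, 0 ≤ V t)
    (hV0 : 0 < V t₀) (hγ : 0 < γ) (hρ0 : 0 ≤ ρ) (hρ1 : ρ < 1)
    (hineq : ∀ t, t₀ ≤ t → deriv V t ≤ -γ * V t ^ ρ) :
    ∃ t₁ ∈ Set.Icc t₀ (t₀ + V t₀ ^ (1 - ρ) / (γ * (1 - ρ))), V t₁ = 0 := by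
  by_contra hcon
  push_neg at hcon
  set T := t₀ + V t₀ ^ (1 - ρ) / (γ * (1 - ρ)) with hT
  have h1ρ : (0:ℝ) < 1 - ρ := by linarith
  have hden : (0:ℝ) < γ * (1 - ρ) := mul_pos hγ h1ρ
  have hWt0 : (0:ℝ) < V t₀ ^ (1 - ρ) := Real.rpow_pos_of_pos hV0 _
  have ht0T : t₀ ≤ T := by
    have h := div_pos hWt0 hden
    rw [hT]; linarith
  have hpos : ∀ t ∈ Set.Icc t₀ T, 0 < V t := fun t ht =>
    lt_of_le_of_ne (hnonneg t) (fun h => hcon t ht h.symm)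
  set g : ℝ → ℝ := fun t => V t ^ (1 - ρ) + γ * (1 - ρ) * t with hg
  have hVd : Differentiable ℝ V := hC1.differentiable one_ne_zero
  have hgc : ContinuousOn g (Set.Icc t₀ T) := by
    apply ContinuousOn.add
    · exact fun t _ =>
        ((Real.continuousAt_rpow_const (V t) (1 - ρ) (Or.inr h1ρ.le)).comp
          (hVd.continuous.continuousAt)).continuousWithinAt
    · exact (continuous_const.mul continuous_id).continuousOn
  have hGd : ∀ t ∈ Set.Ioo t₀ T, HasDerivAt g
      (deriv V t * (1 - ρ) * V t ^ (1 - ρ - 1) + γ * (1 - ρ)) t := by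
    intro t ht
    have hVt : 0 < V t := hpos t ⟨ht.1.le, ht.2.le⟩
    have hW : HasDerivAt (fun t => V t ^ (1 - ρ))
        (deriv V t * (1 - ρ) * V t ^ (1 - ρ - 1)) t :=
      (hVd t).hasDerivAt.rpow_const (Or.inl hVt.ne')
    exact (hW.add ((hasDerivAt_id t).const_mul (γ * (1 - ρ)))).congr_deriv (by ring)
  have hgderiv : ∀ t ∈ Set.Ioo t₀ T, deriv g t ≤ 0 := by
    intro t ht
    have hVt : 0 < V t := hpos t ⟨ht.1.le, ht.2.le⟩
    rw [(hGd t ht).deriv]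
    have hV' := hineq t ht.1.le
    have hpow : (0:ℝ) < V t ^ (1 - ρ - 1) := Real.rpow_pos_of_pos hVt _
    have key : deriv V t * (1 - ρ) * V t ^ (1 - ρ - 1) ≤
        (-γ * V t ^ ρ) * (1 - ρ) * V t ^ (1 - ρ - 1) := by
      have : 0 ≤ (1 - ρ) * V t ^ (1 - ρ - 1) := by positivity
      calc deriv V t * (1 - ρ) * V t ^ (1 - ρ - 1)
          = deriv V t * ((1 - ρ) * V t ^ (1 - ρ - 1)) := by ring
        _ ≤ (-γ * V t ^ ρ) * ((1 - ρ) * V t ^ (1 - ρ - 1)) :=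
            mul_le_mul_of_nonneg_right hV' this
        _ = (-γ * V t ^ ρ) * (1 - ρ) * V t ^ (1 - ρ - 1) := by ring
    have hmul : V t ^ ρ * V t ^ (1 - ρ - 1) = V t ^ (ρ + (1 - ρ - 1)) :=
      (Real.rpow_add hVt _ _).symm
    have hzero : ρ + (1 - ρ - 1) = 0 := by ring
    have : (-γ * V t ^ ρ) * (1 - ρ) * V t ^ (1 - ρ - 1) = -(γ * (1 - ρ)) := by
      have : V t ^ ρ * V t ^ (1 - ρ - 1) = 1 := by
        rw [hmul, hzero, Real.rpow_zero]
      calc (-γ * V t ^ ρ) * (1 - ρ) * V t ^ (1 - ρ - 1)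
          = -γ * (1 - ρ) * (V t ^ ρ * V t ^ (1 - ρ - 1)) := by ring
        _ = -(γ * (1 - ρ)) := by rw [this]; ring
    linarith [key, this ▸ key]
  have hanti : AntitoneOn g (Set.Icc t₀ T) := by
    apply antitoneOn_of_deriv_nonpos (convex_Icc _ _) hgc
    · intro t ht
      rw [interior_Icc] at ht
      exact ((hGd t ht).differentiableAt).differentiableWithinAt
    · intro t ht
      rw [interior_Icc] at ht
      exact hgderiv t ht
  have hle : g T ≤ g t₀ :=
    hanti (Set.left_mem_Icc.mpr ht0T) (Set.right_mem_Icc.mpr ht0T) ht0T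
  have hWT : 0 < V T ^ (1 - ρ) :=
    Real.rpow_pos_of_pos (hpos T (Set.right_mem_Icc.mpr ht0T)) _
  have hcalc : γ * (1 - ρ) * T = γ * (1 - ρ) * t₀ + V t₀ ^ (1 - ρ) := by
    rw [hT]
    field_simp
  simp only [hg] at hle
  nlinarith [hWT, hle, hcalc]
end

section
/- Consider the double integrator ẋ = (V, u) with state (X, V) ∈ ℝ², and speed-limit barrier h(x) = V_max - V with V_max > 0. For any control input u : ℝ → ℝ with u(t) ≤ γ (V_max - V(t))^ρ · sign(V_max - V(t)) for all t (γ > 0, ρ ∈ [0,1)), if V(t₀) ≤ V_max then V(t) ≤ V_max for all t ≥ t₀, and if V(t₀) > V_max then V(t) ≤ V_max for all t ≥ t₀ + (V(t₀) - V_max)^(1-ρ)/(γ(1-ρ)). -/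
private lemma ubound (V u : ℝ → ℝ) (Vmax γ ρ : ℝ)
    (hu : ∀ t, u t ≤ γ * Real.sign (Vmax - V t) * |Vmax - V t| ^ ρ)
    {t : ℝ} (ht : Vmax < V t) : u t ≤ -(γ * (V t - Vmax) ^ ρ) := by
  have h1 : Vmax - V t < 0 := by linarith
  have := hu t
  rwa [Real.sign_of_neg h1, abs_of_neg h1, show -(Vmax - V t) = V t - Vmax by ring,
    show γ * (-1) * (V t - Vmax) ^ ρ = -(γ * (V t - Vmax) ^ ρ) by ring] at this

private lemma invariance (V u : ℝ → ℝ) (Vmax γ ρ : ℝ)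
    (hγ : 0 < γ)
    (hdyn : ∀ t, HasDerivAt V (u t) t)
    (hu : ∀ t, u t ≤ γ * Real.sign (Vmax - V t) * |Vmax - V t| ^ ρ)
    (s : ℝ) (hs : V s ≤ Vmax) : ∀ t, s ≤ t → V t ≤ Vmax := by
  intro t ht
  by_contra hVt
  push_neg at hVt
  have hVcont : Continuous V :=
    (Differentiable.continuous (fun x => (hdyn x).differentiableAt))
  set S : Set ℝ := {r | r ∈ Set.Icc s t ∧ V r ≤ Vmax} with hS
  have hSne : S.Nonempty := ⟨s, ⟨le_refl s, ht⟩, hs⟩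
  have hSbdd : BddAbove S := ⟨t, fun r hr => hr.1.2⟩
  have hSclosed : IsClosed S := by
    have : S = Set.Icc s t ∩ V ⁻¹' (Set.Iic Vmax) := by
      ext r; simp [hS, Set.mem_Icc, and_assoc]
    rw [this]
    exact isClosed_Icc.inter (isClosed_Iic.preimage hVcont)
  set c := sSup S with hc
  have hcS : c ∈ S := hSclosed.csSup_mem hSne hSbdd
  have hct : c < t := by
    rcases lt_or_eq_of_le hcS.1.2 with h | h
    · exact h
    · exact absurd (h ▸ hcS.2) (not_le.mpr hVt)
  have hmid : ∀ x, c < x → x ≤ t → Vmax < V x := by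
    intro x hcx hxt
    by_contra hx
    push_neg at hx
    exact absurd (le_csSup hSbdd ⟨⟨le_trans hcS.1.1 hcx.le, hxt⟩, hx⟩) (not_le.mpr hcx)
  have hanti : StrictAntiOn V (Set.Icc c t) := by
    apply strictAntiOn_of_deriv_neg (convex_Icc c t) (hVcont.continuousOn)
    intro x hx
    rw [interior_Icc] at hx
    rw [(hdyn x).deriv]
    have hVx := hmid x hx.1 hx.2.le
    have := ubound V u Vmax γ ρ hu hVx
    have hpos : 0 < (V x - Vmax) ^ ρ := Real.rpow_pos_of_pos (by linarith) ρ
    nlinarith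
  have := hanti ⟨le_refl c, hct.le⟩ ⟨hct.le, le_refl t⟩ hct
  exact absurd (lt_of_lt_of_le this hcS.2) (not_lt.mpr hVt.le)

/-- TV-FCBF contract for the speed-limit barrier `h = V_max - V` with single
integrator dynamics `V' = u`: the FCBF input bound gives forward invariance of
`{V ≤ V_max}` and finite-time convergence from above. -/
theorem stmt_10 (V u : ℝ → ℝ) (Vmax γ ρ t₀ : ℝ)
    (hVmax : 0 < Vmax) (hγ : 0 < γ) (hρ0 : 0 ≤ ρ) (hρ1 : ρ < 1)
    (hdyn : ∀ t, HasDerivAt V (u t) t)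
    (hu : ∀ t, u t ≤ γ * Real.sign (Vmax - V t) * |Vmax - V t| ^ ρ) :
    (V t₀ ≤ Vmax → ∀ t, t₀ ≤ t → V t ≤ Vmax) ∧
    (Vmax < V t₀ →
      ∀ t, t₀ + (V t₀ - Vmax) ^ (1 - ρ) / (γ * (1 - ρ)) ≤ t → V t ≤ Vmax) := by
  constructor
  · exact fun h => invariance V u Vmax γ ρ hγ hdyn hu t₀ h
  · intro h0 t ht
    have h1ρ : 0 < 1 - ρ := by linarith
    have hγρ : 0 < γ * (1 - ρ) := by positivity
    set w₀ := V t₀ - Vmax with hw₀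
    have hw₀pos : 0 < w₀ := by simp [hw₀]; linarith
    set T := t₀ + w₀ ^ (1 - ρ) / (γ * (1 - ρ)) with hT
    have ht₀T : t₀ ≤ T := by
      have : 0 ≤ w₀ ^ (1 - ρ) / (γ * (1 - ρ)) :=
        div_nonneg (Real.rpow_nonneg hw₀pos.le _) hγρ.le
      rw [hT]; linarith
    -- find s ∈ [t₀, T] with V s ≤ Vmax
    have hex : ∃ s ∈ Set.Icc t₀ T, V s ≤ Vmax := by
      by_contra hall
      push_neg at hall
      have hbig : ∀ x ∈ Set.Icc t₀ T, Vmax < V x := hall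
      set ψ : ℝ → ℝ := fun x => (V x - Vmax) ^ (1 - ρ) + γ * (1 - ρ) * x with hψ
      have hψderiv : ∀ x ∈ Set.Icc t₀ T,
          HasDerivAt ψ (u x * (1 - ρ) * (V x - Vmax) ^ (1 - ρ - 1) + γ * (1 - ρ)) x := by
        intro x hx
        have hne : V x - Vmax ≠ 0 := by have := hbig x hx; intro h; linarith [sub_eq_zero.mp h]
        exact (((hdyn x).sub_const Vmax).rpow_const (Or.inl hne)).add
          ((hasDerivAt_id x).const_mul (γ * (1 - ρ)) |>.congr_deriv (by ring))
      have hcont : ContinuousOn ψ (Set.Icc t₀ T) :=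
        fun x hx => ((hψderiv x hx).continuousAt).continuousWithinAt
      have hdiff : DifferentiableOn ℝ ψ (interior (Set.Icc t₀ T)) := by
        rw [interior_Icc]
        intro x hx
        exact ((hψderiv x ⟨hx.1.le, hx.2.le⟩).differentiableAt).differentiableWithinAt
      have hanti : AntitoneOn ψ (Set.Icc t₀ T) := by
        apply antitoneOn_of_deriv_nonpos (convex_Icc t₀ T) hcont hdiff
        · intro x hx
          rw [interior_Icc] at hx
          have hxm : x ∈ Set.Icc t₀ T := ⟨hx.1.le, hx.2.le⟩
          rw [(hψderiv x hxm).deriv]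
          have hVx := hbig x hxm
          have hwx : 0 < V x - Vmax := by linarith
          have hub := ubound V u Vmax γ ρ hu hVx
          have hkey : (V x - Vmax) ^ ρ * (V x - Vmax) ^ (1 - ρ - 1) = 1 := by
            rw [← Real.rpow_add hwx]; norm_num
          have hp1 : 0 < (V x - Vmax) ^ (1 - ρ - 1) := Real.rpow_pos_of_pos hwx _
          have : u x * (1 - ρ) * (V x - Vmax) ^ (1 - ρ - 1) ≤
              -(γ * (V x - Vmax) ^ ρ) * (1 - ρ) * (V x - Vmax) ^ (1 - ρ - 1) := by
            apply mul_le_mul_of_nonneg_right _ hp1.le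
            exact mul_le_mul_of_nonneg_right hub h1ρ.le
          nlinarith [this]
      have hTT : ψ T ≤ ψ t₀ := hanti ⟨le_refl _, ht₀T⟩ ⟨ht₀T, le_refl _⟩ ht₀T
      have hψt₀ : ψ t₀ = w₀ ^ (1 - ρ) + γ * (1 - ρ) * t₀ := rfl
      have hψT : (V T - Vmax) ^ (1 - ρ) + γ * (1 - ρ) * T ≤ w₀ ^ (1 - ρ) + γ * (1 - ρ) * t₀ := hTT
      have hTval : γ * (1 - ρ) * T = γ * (1 - ρ) * t₀ + w₀ ^ (1 - ρ) := by
        rw [hT]; field_simp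
      have hVTpos : 0 < (V T - Vmax) ^ (1 - ρ) :=
        Real.rpow_pos_of_pos (by have := hbig T ⟨ht₀T, le_refl _⟩; linarith) _
      linarith
    obtain ⟨s, hsmem, hVs⟩ := hex
    exact invariance V u Vmax γ ρ hγ hdyn hu s hVs t (le_trans hsmem.2 ht)
end

section
/- Let h : [t₀,∞) → ℝ be continuous, piecewise continuously differentiable with finitely many breakpoints t₀ < s₁ < ... < s_k, satisfying on each smooth piece h'(t) ≥ -γ sign(h(t)) |h(t)|^ρ with γ > 0, ρ ∈ [0,1). If h(t₀) ≥ 0 then h(t) ≥ 0 for all t ≥ t₀. -/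
/-!
If `h` became negative at some `t₁`, let `c` be the last time before `t₁` at which `h ≥ 0`.
Right after `c` there is an interval free of breakpoints on which `h < 0`; there the barrier
inequality reads `h' ≥ γ |h|^ρ ≥ 0`, so `h` is nondecreasing, and its value at the end of
that interval is at least `h c ≥ 0`, a contradiction.
-/

open Set Topology

theorem ContinuousOn.exists_last_nonneg {α : Type*} [ConditionallyCompleteLinearOrder α]
    [TopologicalSpace α] [OrderTopology α] {f : α → ℝ} {a b : α} (hab : a ≤ b)
    (hf : ContinuousOn f (Icc a b)) (ha : 0 ≤ f a) (hb : f b < 0) :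
    ∃ c ∈ Ico a b, 0 ≤ f c ∧ ∀ t ∈ Ioc c b, f t < 0 := by
  set K := Icc a b ∩ f ⁻¹' Ici 0
  have hK_bdd : BddAbove K := ⟨b, fun x hx => hx.1.2⟩
  have hc : sSup K ∈ K :=
    (hf.preimage_isClosed_of_isClosed isClosed_Icc isClosed_Ici).csSup_mem
      ⟨a, left_mem_Icc.2 hab, ha⟩ hK_bdd
  refine ⟨sSup K, ⟨hc.1.1, hc.1.2.lt_of_ne fun hcb => ?_⟩, hc.2, fun t ht => ?_⟩
  · exact hb.not_ge (hcb ▸ hc.2)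
  · by_contra! ht_nonneg
    exact ht.1.not_ge (le_csSup hK_bdd ⟨⟨hc.1.1.trans ht.1.le, ht.2⟩, ht_nonneg⟩)

theorem Set.Finite.exists_Ioo_subset_compl {α : Type*} [LinearOrder α] [TopologicalSpace α]
    [OrderTopology α] {S : Set α} (hS : S.Finite) {x b : α} (hxb : x < b) :
    ∃ u ∈ Ioc x b, Ioo x u ⊆ Sᶜ := by
  have hS_nhdsNE : Sᶜ ∈ 𝓝[≠] x := by
    simpa using mem_codiscreteWithin_iff_forall_mem_nhdsNE.1 hS.compl_mem_codiscrete x trivial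
  exact (mem_nhdsGT_iff_exists_mem_Ioc_Ioo_subset hxb).1 (nhdsGT_le_nhdsNE x hS_nhdsNE)

theorem neg_mul_sign_mul_rpow_nonneg_of_neg {γ y : ℝ} (ρ : ℝ) (hγ : 0 ≤ γ) (hy : y < 0) :
    0 ≤ -γ * Real.sign y * |y| ^ ρ := by
  rw [Real.sign_of_neg hy, neg_mul_neg, mul_one]
  positivity

theorem stmt_16_general (h : ℝ → ℝ) (t₀ γ ρ : ℝ) (k : ℕ) (s : Fin k → ℝ)
    (hγ : 0 < γ)
    (hcont : ContinuousOn h (Set.Ici t₀))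
    (hdiff : ∀ t, t₀ ≤ t → (∀ i, t ≠ s i) →
      DifferentiableAt ℝ h t ∧
      deriv h t ≥ -γ * Real.sign (h t) * |h t| ^ ρ)
    (h0 : 0 ≤ h t₀) :
    ∀ t, t₀ ≤ t → 0 ≤ h t := by
  intro t₁ ht₁
  by_contra! ht₁_neg
  obtain ⟨c, ⟨ht₀c, hct₁⟩, hc_nonneg, h_neg⟩ :=
    (hcont.mono Icc_subset_Ici_self).exists_last_nonneg ht₁ h0 ht₁_neg
  obtain ⟨u, hu, hu_smooth⟩ := (finite_range s).exists_Ioo_subset_compl hct₁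
  have h_smooth : ∀ x ∈ Ioo c u,
      DifferentiableAt ℝ h x ∧ deriv h x ≥ -γ * Real.sign (h x) * |h x| ^ ρ :=
    fun x hx => hdiff x (ht₀c.trans hx.1.le) fun i hxi => hu_smooth hx ⟨i, hxi.symm⟩
  have hmono : MonotoneOn h (Icc c u) := by
    refine monotoneOn_of_deriv_nonneg (convex_Icc c u)
      (hcont.mono fun x hx => ht₀c.trans hx.1) ?_ ?_ <;> rw [interior_Icc]
    · exact fun x hx => (h_smooth x hx).1.differentiableWithinAt
    · intro x hx
      have hx_neg : h x < 0 := h_neg x ⟨hx.1, hx.2.le.trans hu.2⟩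
      exact (neg_mul_sign_mul_rpow_nonneg_of_neg ρ hγ.le hx_neg).trans (h_smooth x hx).2
  have hcu : h c ≤ h u := hmono (left_mem_Icc.2 hu.1.le) (right_mem_Icc.2 hu.1.le) hu.1.le
  linarith [h_neg u hu]

/-- Forward invariance of the barrier inequality for piecewise-C¹ trajectories:
if `h` is continuous on `[t₀,∞)` and satisfies the FCBF differential inequality
away from finitely many breakpoints, then `h(t₀) ≥ 0` implies `h(t) ≥ 0` for
all `t ≥ t₀`. -/
theorem stmt_16 (h : ℝ → ℝ) (t₀ γ ρ : ℝ) (k : ℕ) (s : Fin k → ℝ)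
    (hγ : 0 < γ) (hρ0 : 0 ≤ ρ) (hρ1 : ρ < 1)
    (hs : StrictMono s) (hs0 : ∀ i, t₀ < s i)
    (hcont : ContinuousOn h (Set.Ici t₀))
    (hdiff : ∀ t, t₀ ≤ t → (∀ i, t ≠ s i) →
      DifferentiableAt ℝ h t ∧
      deriv h t ≥ -γ * Real.sign (h t) * |h t| ^ ρ)
    (h0 : 0 ≤ h t₀) :
    ∀ t, t₀ ≤ t → 0 ≤ h t :=
  stmt_16_general h t₀ γ ρ k s hγ hcont hdiff h0
end

section
/- In the vehicle-following model with spacing error h₁ = X_r - h·V_f - S₀ - (V_f² - V_l²)/(2 a_max), where X_r' = V_l - V_f, V_f' = (u - F_r)/m, V_l' = a_l, any input satisfying u ≤ (m a_max/(h a_max + V_f)) (h₁ + V_r + (V_l/a_max) a_l) + F_r with h a_max + V_f > 0 guarantees dh₁/dt ≥ -h₁ along trajectories, and hence h₁(t₀) ≥ 0 implies h₁(t) ≥ 0 for all t ≥ t₀. -/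
/-- Case-study safe-distance constraint: under the vehicle-following dynamics,
the stated input bound makes the spacing error `h₁` satisfy `ḣ₁ ≥ -h₁`, hence
`{h₁ ≥ 0}` is forward invariant. -/
theorem stmt_17 (Xr Vf Vl u Fr al : ℝ → ℝ) (m hh S0 amax t₀ : ℝ)
    (hm : 0 < m) (hhh : 0 < hh) (hS0 : 0 < S0) (hamax : 0 < amax)
    (h₁ : ℝ → ℝ)
    (hdef : ∀ t, h₁ t =
      Xr t - hh * Vf t - S0 - ((Vf t) ^ 2 - (Vl t) ^ 2) / (2 * amax))
    (hXr : ∀ t, HasDerivAt Xr (Vl t - Vf t) t)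
    (hVf : ∀ t, HasDerivAt Vf ((u t - Fr t) / m) t)
    (hVl : ∀ t, HasDerivAt Vl (al t) t)
    (hpos : ∀ t, 0 < hh * amax + Vf t)
    (hu : ∀ t, u t ≤ (m * amax / (hh * amax + Vf t)) *
        (h₁ t + (Vl t - Vf t) + (Vl t / amax) * al t) + Fr t) :
    (∀ t, -h₁ t ≤ deriv h₁ t) ∧
    (0 ≤ h₁ t₀ → ∀ t, t₀ ≤ t → 0 ≤ h₁ t) := by
  have hfun : h₁ = fun t => Xr t - hh * Vf t - S0 -
      ((Vf t) ^ 2 - (Vl t) ^ 2) / (2 * amax) := funext hdef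
  have hD : ∀ t, HasDerivAt h₁
      ((Vl t - Vf t) - hh * ((u t - Fr t) / m) -
        (2 * Vf t ^ 1 * ((u t - Fr t) / m) - 2 * Vl t ^ 1 * al t) / (2 * amax)) t := by
    intro t
    rw [hfun]
    exact (((hXr t).sub ((hVf t).const_mul hh)).sub_const S0).sub
      ((((hVf t).pow 2).sub ((hVl t).pow 2)).div_const (2 * amax))
  have key : ∀ t, -h₁ t ≤ (Vl t - Vf t) - hh * ((u t - Fr t) / m) -
      (2 * Vf t ^ 1 * ((u t - Fr t) / m) - 2 * Vl t ^ 1 * al t) / (2 * amax) := by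
    intro t
    have hp := hpos t
    have hb := hu t
    have hb' : (hh * amax + Vf t) * (u t - Fr t) ≤
        m * amax * (h₁ t + (Vl t - Vf t) + (Vl t / amax) * al t) := by
      have := mul_le_mul_of_nonneg_left (sub_le_sub_right hb (Fr t)) hp.le
      calc (hh * amax + Vf t) * (u t - Fr t) ≤
          (hh * amax + Vf t) * (m * amax / (hh * amax + Vf t) *
            (h₁ t + (Vl t - Vf t) + (Vl t / amax) * al t) + Fr t - Fr t) := by
            simpa using this
        _ = m * amax * (h₁ t + (Vl t - Vf t) + (Vl t / amax) * al t) := by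
            field_simp; ring
    have hVla : m * amax * ((Vl t / amax) * al t) = m * Vl t * al t := by
      field_simp
    have hb2 : (hh * amax + Vf t) * (u t - Fr t) ≤
        m * amax * (h₁ t + (Vl t - Vf t)) + m * Vl t * al t := by
      rw [mul_add] at hb'; linarith
    have hrw : (Vl t - Vf t) - hh * ((u t - Fr t) / m) -
        (2 * Vf t ^ 1 * ((u t - Fr t) / m) - 2 * Vl t ^ 1 * al t) / (2 * amax) =
        (m * amax * (Vl t - Vf t) - (hh * amax + Vf t) * (u t - Fr t)
          + m * Vl t * al t) / (m * amax) := by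
      field_simp; ring
    rw [hrw, le_div_iff₀ (by positivity : (0:ℝ) < m * amax)]
    nlinarith [hb2]
  have hDeriv : ∀ t, -h₁ t ≤ deriv h₁ t := fun t => by
    rw [(hD t).deriv]; exact key t
  refine ⟨hDeriv, fun h0 t ht => ?_⟩
  set g : ℝ → ℝ := fun s => Real.exp s * h₁ s with hg
  have hgd : ∀ s, HasDerivAt g (Real.exp s * h₁ s + Real.exp s *
      ((Vl s - Vf s) - hh * ((u s - Fr s) / m) -
        (2 * Vf s ^ 1 * ((u s - Fr s) / m) - 2 * Vl s ^ 1 * al s) / (2 * amax))) s := by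
    intro s
    exact (Real.hasDerivAt_exp s).mul (hD s)
  have hmono : MonotoneOn g (Set.Icc t₀ t) := by
    apply monotoneOn_of_deriv_nonneg (convex_Icc t₀ t)
    · exact Continuous.continuousOn
        (continuous_iff_continuousAt.2 fun s => (hgd s).differentiableAt.continuousAt)
    · intro s hs
      exact (hgd s).differentiableAt.differentiableWithinAt
    · intro s hs
      rw [(hgd s).deriv]
      nlinarith [Real.exp_pos s, key s]
  have hle : g t₀ ≤ g t :=
    hmono (Set.left_mem_Icc.2 ht) (Set.right_mem_Icc.2 ht) ht
  have h0' : 0 ≤ g t₀ := mul_nonneg (Real.exp_pos t₀).le h0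
  have : 0 ≤ Real.exp t * h₁ t := le_trans h0' hle
  by_contra hneg
  push_neg at hneg
  have := mul_neg_of_pos_of_neg (Real.exp_pos t) hneg
  linarith
end
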